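/- If A: R → SL(2,R) is continuous and satisfies A(x+1/2) = T^{-1} A(x) T for all x, where T = diag(−1,1), and A is 1-periodic, then the topological degree of A (as a map from the circle T to SL(2,R)) equals 0. -/

import Mathlib

/-!
Conjugating a degree-`l` homotopy `H` by `T` and shifting it by half a period gives the homotopy
`T H(s, x) T H(s, x + 1/2)⁻¹` of periodic loops in `SL(2, ℝ)`, from the constant loop `1` (by the
conjugation identity) to the rotation loop `x ↦ R_{-lx - l(x + 1/2)}`, of degree `-2l`. Read the
first column as a nonvanishing complex number and lift it through `exp` to `g` on the simply
connected plane: the jump `g(s, x + 1) - g(s, x)` of the lift lies in `2πiℤ`, so it is constant, yet it is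
`0` at `s = 0` and `-4πil` at `s = 1`.
-/

open Matrix Real

noncomputable def rotMat (θ : ℝ) : Matrix (Fin 2) (Fin 2) ℝ :=
  !![Real.cos (2 * π * θ), -Real.sin (2 * π * θ);
     Real.sin (2 * π * θ),  Real.cos (2 * π * θ)]

def HasDegreeSL (A : ℝ → Matrix (Fin 2) (Fin 2) ℝ) (l : ℤ) : Prop :=
  ∃ H : ℝ → ℝ → Matrix (Fin 2) (Fin 2) ℝ,
    Continuous (fun p : ℝ × ℝ => H p.1 p.2) ∧
    (∀ s x, (H s x).det = 1) ∧
    (∀ s x, H s (x + 1) = H s x) ∧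
    (∀ x, H 0 x = A x) ∧
    (∀ x, H 1 x = rotMat ((l : ℝ) * x))

namespace Complex

theorem sub_eq_sub_of_exp_eq {X : Type*} [TopologicalSpace X] [PreconnectedSpace X]
    {f g : X → ℂ} (hf : Continuous f) (hg : Continuous g) (h : ∀ x, exp (f x) = exp (g x))
    (x x' : X) : f x - g x = f x' - g x' :=
  isCoveringMap_exp.const_of_comp (g := fun x => f x - g x) (by fun_prop)
    (fun x x' => Subtype.ext <| by simp only [exp_sub, h, div_self (exp_ne_zero _)]) x x'

theorem exists_continuous_exp_eq {X : Type*} [TopologicalSpace X] [SimplyConnectedSpace X]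
    [LocallyPathConnectedSpace X] {f : X → ℂ} (hf : Continuous f) (hf₀ : ∀ x, f x ≠ 0) :
    ∃ g : X → ℂ, Continuous g ∧ ∀ x, exp (g x) = f x := by
  obtain ⟨x₀⟩ : Nonempty X := inferInstance
  obtain ⟨g, ⟨-, hg⟩, -⟩ := isCoveringMapOn_exp.existsUnique_continuousMap_lifts ⟨f, hf⟩
    (exp_log (hf₀ x₀)) hf₀
  exact ⟨g, g.continuous, congrFun hg⟩

end Complex

theorem int_eq_of_periodic_homotopy_of_exp {F : ℝ → ℝ → ℂ}
    (hF : Continuous fun p : ℝ × ℝ => F p.1 p.2) (hF₀ : ∀ s x, F s x ≠ 0)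
    (hper : ∀ s x, F s (x + 1) = F s x) {φ₀ φ₁ : ℝ → ℝ} (hφ₀ : Continuous φ₀)
    (hφ₁ : Continuous φ₁) {k₀ k₁ : ℤ} (hk₀ : ∀ x, φ₀ (x + 1) = φ₀ x + k₀)
    (hk₁ : ∀ x, φ₁ (x + 1) = φ₁ x + k₁)
    (h₀ : ∀ x, F 0 x = Complex.exp (2 * π * φ₀ x * Complex.I))
    (h₁ : ∀ x, F 1 x = Complex.exp (2 * π * φ₁ x * Complex.I)) : k₀ = k₁ := by
  obtain ⟨g, hg, hexp⟩ := Complex.exists_continuous_exp_eq hF fun p => hF₀ p.1 p.2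
  have hjump (s x : ℝ) : g (s, x + 1) - g (s, x) = g (0, 0 + 1) - g (0, 0) :=
    Complex.sub_eq_sub_of_exp_eq (f := fun p => g (p.1, p.2 + 1)) (by fun_prop) hg
      (fun p => by simp only [hexp, hper]) (s, x) (0, 0)
  have hjump_eq (s : ℝ) (φ : ℝ → ℝ) (hφ : Continuous φ) (k : ℤ) (hk : ∀ x, φ (x + 1) = φ x + k)
      (hs : ∀ x, F s x = Complex.exp (2 * π * φ x * Complex.I)) :
      g (s, 0 + 1) - g (s, 0) = 2 * π * k * Complex.I := by
    have := Complex.sub_eq_sub_of_exp_eq (f := fun x => g (s, x))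
      (g := fun x => 2 * π * φ x * Complex.I) (by fun_prop) (by fun_prop)
      (fun x => by simp only [hexp, hs]) (0 + 1) 0
    rw [hk] at this
    push_cast at this
    linear_combination this
  have := (hjump_eq 0 φ₀ hφ₀ k₀ hk₀ h₀).symm.trans
    ((hjump 1 0).symm.trans (hjump_eq 1 φ₁ hφ₁ k₁ hk₁ h₁))
  have hπ : (2 * π * Complex.I : ℂ) ≠ 0 := by simp [Real.pi_ne_zero, Complex.I_ne_zero]
  have hk : (k₀ : ℂ) = k₁ := mul_right_cancel₀ hπ (by linear_combination this)
  exact_mod_cast hk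

def firstColumnComplex (M : Matrix (Fin 2) (Fin 2) ℝ) : ℂ :=
  M 0 0 + M 1 0 * Complex.I

theorem continuous_firstColumnComplex : Continuous firstColumnComplex := by
  unfold firstColumnComplex
  fun_prop

theorem firstColumnComplex_ne_zero {M : Matrix (Fin 2) (Fin 2) ℝ} (hM : M.det ≠ 0) :
    firstColumnComplex M ≠ 0 := by
  intro h
  have h00 : M 0 0 = 0 := by simpa [firstColumnComplex] using congrArg Complex.re h
  have h10 : M 1 0 = 0 := by simpa [firstColumnComplex] using congrArg Complex.im h
  exact hM (by simp [Matrix.det_fin_two, h00, h10])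

theorem firstColumnComplex_one : firstColumnComplex 1 = 1 := by
  simp [firstColumnComplex]

theorem firstColumnComplex_rotMat (θ : ℝ) :
    firstColumnComplex (rotMat θ) = Complex.exp (2 * π * θ * Complex.I) := by
  simp [firstColumnComplex, rotMat, Complex.exp_mul_I, Complex.ofReal_cos, Complex.ofReal_sin]

theorem diag_neg_one_one_mul_rotMat_mul_mul_adjugate_rotMat (a b : ℝ) :
    !![(-1 : ℝ), 0; 0, 1] * rotMat a * !![(-1 : ℝ), 0; 0, 1] * adjugate (rotMat b)
      = rotMat (-a - b) := by
  have hc : 2 * π * (-a - b) = -(2 * π * a) + -(2 * π * b) := by ring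
  ext i j
  fin_cases i <;> fin_cases j <;>
    simp [rotMat, Matrix.adjugate_fin_two, hc, Real.cos_add, Real.sin_add] <;>
    ring

theorem degree_eq_zero_of_half_period_conjugation_general
    (A : ℝ → Matrix (Fin 2) (Fin 2) ℝ)
    (hdet : ∀ x, (A x).det = 1)
    (hconj : ∀ x, A (x + 1/2) = (!![(-1 : ℝ), 0; 0, 1])⁻¹ * A x * !![(-1 : ℝ), 0; 0, 1])
    (l : ℤ) (hdeg : HasDegreeSL A l) : l = 0 := by
  obtain ⟨H, hH, hHdet, hHper, hH₀, hH₁⟩ := hdeg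
  set T : Matrix (Fin 2) (Fin 2) ℝ := !![(-1 : ℝ), 0; 0, 1] with hT
  have hTinv : T⁻¹ = T := Matrix.inv_eq_right_inv (by simp [T, Matrix.one_fin_two])
  have hTdet : T.det = -1 := by simp [T, Matrix.det_fin_two_of]
  set F : ℝ → ℝ → ℂ := fun s x => firstColumnComplex (T * H s x * T * adjugate (H s (x + 1/2)))
  have hF₀ (x : ℝ) : F 0 x = Complex.exp (2 * π * (0 : ℝ) * Complex.I) := by
    simp only [F, hH₀, hTinv ▸ (hconj x).symm, mul_adjugate, hdet, one_smul,
      firstColumnComplex_one]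
    simp
  have hF₁ (x : ℝ) : F 1 x = Complex.exp (2 * π * ↑(-(l * x) - l * (x + 1/2)) * Complex.I) := by
    simp only [F, hH₁, hT, diag_neg_one_one_mul_rotMat_mul_mul_adjugate_rotMat,
      firstColumnComplex_rotMat]
  have hdeg : 0 = -2 * l := int_eq_of_periodic_homotopy_of_exp (F := F)
    (continuous_firstColumnComplex.comp (by fun_prop))
    (fun s x => firstColumnComplex_ne_zero (by simp [det_mul, det_adjugate, hTdet, hHdet]))
    (fun s x => by simp only [F, hHper, add_right_comm x 1]) continuous_const (by fun_prop)
    (k₀ := 0) (k₁ := -2 * l) (fun x => by simp) (fun x => by push_cast; ring) hF₀ hF₁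
  omega

/-- If a continuous 1-periodic `A : 𝕋 → SL(2,ℝ)` satisfies
`A(x + 1/2) = T⁻¹ A(x) T` with `T = diag(−1, 1)`, then its degree is `0`. -/
theorem degree_eq_zero_of_half_period_conjugation
    (A : ℝ → Matrix (Fin 2) (Fin 2) ℝ)
    (hc : Continuous A) (hdet : ∀ x, (A x).det = 1)
    (hper : ∀ x, A (x + 1) = A x)
    (hconj : ∀ x, A (x + 1/2) = (!![(-1 : ℝ), 0; 0, 1])⁻¹ * A x * !![(-1 : ℝ), 0; 0, 1])
    (l : ℤ) (hdeg : HasDegreeSL A l) : l = 0 :=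
  degree_eq_zero_of_half_period_conjugation_general A hdet hconj l hdeg
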